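/- arXiv:1602.00145 — 9 statements merged into one kernel-verified Lean document; each statement's English description precedes it below -/
import Mathlib

section
/- Let n ≥ 1, let a, h ∈ ℂⁿ with h ≠ 0, and let c ≥ 0 be real. Then the function w ↦ |wᴴh|² / (c·|wᴴa|² + 1) attains its maximum over the unit sphere {w ∈ ℂⁿ : ‖w‖ = 1}, and the maximum value equals ‖h‖² − c·|aᴴh|² / (1 + c·‖a‖²). -/
/-! For `c ≥ 0` the linear map `T x = (x, √c ⟪a, x⟫)` into `E × 𝕜` has `TᴴT = I + c a aᴴ`, so on
the unit sphere the denominator is `‖T w‖²`. The Sherman–Morrison vector `v = (I + c a aᴴ)⁻¹ h`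
satisfies `⟪T w, T v⟫ = ⟪w, h⟫`, hence Cauchy–Schwarz bounds the quotient by
`‖T v‖² = ⟪v, h⟫ = hᴴ (I + c a aᴴ)⁻¹ h`, with equality at `w = v / ‖v‖`. -/

open scoped InnerProductSpace

namespace RankOneRayleigh

variable {𝕜 E : Type*} [RCLike 𝕜] [NormedAddCommGroup E] [InnerProductSpace 𝕜 E]

variable (𝕜) in
noncomputable def augment (a : E) (c : ℝ) : E →ₗ[𝕜] WithLp 2 (E × 𝕜) where
  toFun x := WithLp.toLp 2 (x, (√c : 𝕜) * ⟪a, x⟫_𝕜)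
  map_add' x y := by simp only [inner_add_right, mul_add]; rfl
  map_smul' r x := by
    simp only [inner_smul_right, RingHom.id_apply, mul_left_comm _ r]; rfl

variable {a : E} {c : ℝ}

theorem inner_augment (hc : 0 ≤ c) (x y : E) :
    ⟪augment 𝕜 a c x, augment 𝕜 a c y⟫_𝕜 = ⟪x, y⟫_𝕜 + c * ⟪x, a⟫_𝕜 * ⟪a, y⟫_𝕜 := by
  have hsqrt : (√c : 𝕜) * √c = c := by norm_cast; exact Real.mul_self_sqrt hc
  simp only [augment, LinearMap.coe_mk, AddHom.coe_mk, WithLp.prod_inner_apply,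
    RCLike.inner_apply, map_mul, RCLike.conj_ofReal, inner_conj_symm]
  linear_combination ⟪x, a⟫_𝕜 * ⟪a, y⟫_𝕜 * hsqrt

theorem norm_augment_sq (hc : 0 ≤ c) (x : E) :
    ‖augment 𝕜 a c x‖ ^ 2 = ‖x‖ ^ 2 + c * ‖⟪x, a⟫_𝕜‖ ^ 2 := by
  have := inner_augment (𝕜 := 𝕜) (a := a) hc x x
  rw [inner_self_eq_norm_sq_to_K, inner_self_eq_norm_sq_to_K, ← inner_conj_symm a x,
    mul_assoc, RCLike.mul_conj] at this
  exact_mod_cast this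

variable (𝕜) in
/-- `hᴴ (I + c a aᴴ)⁻¹ h`, evaluated by the Sherman–Morrison formula. -/
noncomputable def invQuadForm (a h : E) (c : ℝ) : ℝ :=
  ‖h‖ ^ 2 - c * ‖⟪a, h⟫_𝕜‖ ^ 2 / (1 + c * ‖a‖ ^ 2)

variable (𝕜) in
/-- `(I + c a aᴴ)⁻¹ h`, by the Sherman–Morrison formula. -/
noncomputable def shermanMorrison (a h : E) (c : ℝ) : E :=
  h - (((c / (1 + c * ‖a‖ ^ 2) : ℝ) : 𝕜) * ⟪a, h⟫_𝕜) • a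

variable {h : E}

theorem inner_augment_shermanMorrison (hc : 0 ≤ c) (w : E) :
    ⟪augment 𝕜 a c w, augment 𝕜 a c (shermanMorrison 𝕜 a h c)⟫_𝕜 = ⟪w, h⟫_𝕜 := by
  have hK : (1 + c * ‖a‖ ^ 2 : 𝕜) ≠ 0 := by norm_cast; positivity
  rw [inner_augment hc, shermanMorrison, inner_sub_right, inner_sub_right, inner_smul_right,
    inner_smul_right, inner_self_eq_norm_sq_to_K]
  push_cast
  field_simp
  ring

theorem inner_shermanMorrison_left :
    ⟪shermanMorrison 𝕜 a h c, h⟫_𝕜 = invQuadForm 𝕜 a h c := by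
  rw [shermanMorrison, invQuadForm, inner_sub_left, inner_smul_left, inner_self_eq_norm_sq_to_K,
    map_mul, RCLike.conj_ofReal, mul_assoc, RCLike.conj_mul]
  push_cast
  ring

theorem norm_augment_shermanMorrison_sq (hc : 0 ≤ c) :
    ‖augment 𝕜 a c (shermanMorrison 𝕜 a h c)‖ ^ 2 = invQuadForm 𝕜 a h c := by
  have := inner_augment_shermanMorrison (𝕜 := 𝕜) (a := a) (h := h) hc (shermanMorrison 𝕜 a h c)
  rw [inner_self_eq_norm_sq_to_K, inner_shermanMorrison_left] at this
  exact_mod_cast this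

theorem norm_inner_sq_le (hc : 0 ≤ c) (w : E) :
    ‖⟪w, h⟫_𝕜‖ ^ 2 ≤ invQuadForm 𝕜 a h c * ‖augment 𝕜 a c w‖ ^ 2 := by
  rw [← inner_augment_shermanMorrison hc, ← norm_augment_shermanMorrison_sq hc, ← mul_pow,
    mul_comm]
  gcongr
  exact norm_inner_le_norm _ _

theorem norm_inner_smul_shermanMorrison_sq (hc : 0 ≤ c) (r : 𝕜) :
    ‖⟪r • shermanMorrison 𝕜 a h c, h⟫_𝕜‖ ^ 2 =
      invQuadForm 𝕜 a h c * ‖augment 𝕜 a c (r • shermanMorrison 𝕜 a h c)‖ ^ 2 := by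
  rw [map_smul, norm_smul, inner_smul_left, inner_shermanMorrison_left, norm_mul, RCLike.norm_conj,
    mul_pow, mul_pow, norm_augment_shermanMorrison_sq hc, RCLike.norm_ofReal, sq_abs]
  ring

theorem shermanMorrison_ne_zero (hc : 0 ≤ c) (hh : h ≠ 0) : shermanMorrison 𝕜 a h c ≠ 0 := by
  intro hv
  apply hh
  rw [← inner_self_eq_zero (𝕜 := 𝕜), ← inner_augment_shermanMorrison hc, hv, map_zero,
    inner_zero_right]

theorem norm_inner_sq_div_le (hc : 0 ≤ c) (w : E) :
    ‖⟪w, h⟫_𝕜‖ ^ 2 / ‖augment 𝕜 a c w‖ ^ 2 ≤ invQuadForm 𝕜 a h c := by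
  refine div_le_of_le_mul₀ (by positivity) ?_ (norm_inner_sq_le hc w)
  rw [← norm_augment_shermanMorrison_sq hc]
  positivity

theorem norm_inner_sq_div_eq_of_norm_eq_one (hc : 0 ≤ c) {r : 𝕜}
    (hr : ‖r • shermanMorrison 𝕜 a h c‖ = 1) :
    ‖⟪r • shermanMorrison 𝕜 a h c, h⟫_𝕜‖ ^ 2 /
      ‖augment 𝕜 a c (r • shermanMorrison 𝕜 a h c)‖ ^ 2 = invQuadForm 𝕜 a h c := by
  have hpos : 0 < ‖augment 𝕜 a c (r • shermanMorrison 𝕜 a h c)‖ ^ 2 := by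
    rw [norm_augment_sq hc, hr]
    positivity
  rw [norm_inner_smul_shermanMorrison_sq hc, mul_div_cancel_right₀ _ hpos.ne']

end RankOneRayleigh

open Matrix RankOneRayleigh

theorem stmt_2_general (n : ℕ) (a h : EuclideanSpace ℂ (Fin n)) (hh : h ≠ 0)
    (c : ℝ) (hc : 0 ≤ c) :
    ∃ wstar : EuclideanSpace ℂ (Fin n), ‖wstar‖ = 1 ∧
      (∀ w : EuclideanSpace ℂ (Fin n), ‖w‖ = 1 →
        ‖star (w : Fin n → ℂ) ⬝ᵥ (h : Fin n → ℂ)‖ ^ 2 /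
            (c * ‖star (w : Fin n → ℂ) ⬝ᵥ (a : Fin n → ℂ)‖ ^ 2 + 1) ≤
          ‖star (wstar : Fin n → ℂ) ⬝ᵥ (h : Fin n → ℂ)‖ ^ 2 /
            (c * ‖star (wstar : Fin n → ℂ) ⬝ᵥ (a : Fin n → ℂ)‖ ^ 2 + 1)) ∧
      ‖star (wstar : Fin n → ℂ) ⬝ᵥ (h : Fin n → ℂ)‖ ^ 2 /
          (c * ‖star (wstar : Fin n → ℂ) ⬝ᵥ (a : Fin n → ℂ)‖ ^ 2 + 1) =
        ‖h‖ ^ 2 - c * ‖star (a : Fin n → ℂ) ⬝ᵥ (h : Fin n → ℂ)‖ ^ 2 / (1 + c * ‖a‖ ^ 2) := by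
  have hdot (x y : EuclideanSpace ℂ (Fin n)) : star (x : Fin n → ℂ) ⬝ᵥ y = ⟪x, y⟫_ℂ :=
    dotProduct_comm _ _
  have hquot (w : EuclideanSpace ℂ (Fin n)) (hw : ‖w‖ = 1) :
      ‖star (w : Fin n → ℂ) ⬝ᵥ h‖ ^ 2 / (c * ‖star (w : Fin n → ℂ) ⬝ᵥ a‖ ^ 2 + 1) =
        ‖⟪w, h⟫_ℂ‖ ^ 2 / ‖augment ℂ a c w‖ ^ 2 := by
    rw [hdot, hdot, norm_augment_sq hc, hw, one_pow, add_comm]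
  set v := shermanMorrison ℂ a h c
  have hunit : ‖(‖v‖⁻¹ : ℂ) • v‖ = 1 := norm_smul_inv_norm (shermanMorrison_ne_zero hc hh)
  have hmax := norm_inner_sq_div_eq_of_norm_eq_one hc hunit
  refine ⟨_, hunit, fun w hw => ?_, ?_⟩
  · rw [hquot w hw, hquot _ hunit, hmax]
    exact norm_inner_sq_div_le hc w
  · rw [hquot _ hunit, hmax, invQuadForm, hdot]

/-- The function `w ↦ |wᴴh|² / (c·|wᴴa|² + 1)` attains its maximum over the unit
sphere, and the maximum value equals `‖h‖² − c·|aᴴh|²/(1 + c·‖a‖²)`. -/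
theorem stmt_2 (n : ℕ) (hn : 1 ≤ n) (a h : EuclideanSpace ℂ (Fin n)) (hh : h ≠ 0)
    (c : ℝ) (hc : 0 ≤ c) :
    ∃ wstar : EuclideanSpace ℂ (Fin n), ‖wstar‖ = 1 ∧
      (∀ w : EuclideanSpace ℂ (Fin n), ‖w‖ = 1 →
        ‖star (w : Fin n → ℂ) ⬝ᵥ (h : Fin n → ℂ)‖ ^ 2 /
            (c * ‖star (w : Fin n → ℂ) ⬝ᵥ (a : Fin n → ℂ)‖ ^ 2 + 1) ≤
          ‖star (wstar : Fin n → ℂ) ⬝ᵥ (h : Fin n → ℂ)‖ ^ 2 /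
            (c * ‖star (wstar : Fin n → ℂ) ⬝ᵥ (a : Fin n → ℂ)‖ ^ 2 + 1)) ∧
      ‖star (wstar : Fin n → ℂ) ⬝ᵥ (h : Fin n → ℂ)‖ ^ 2 /
          (c * ‖star (wstar : Fin n → ℂ) ⬝ᵥ (a : Fin n → ℂ)‖ ^ 2 + 1) =
        ‖h‖ ^ 2 - c * ‖star (a : Fin n → ℂ) ⬝ᵥ (h : Fin n → ℂ)‖ ^ 2 / (1 + c * ‖a‖ ^ 2) :=
  stmt_2_general n a h hh c hc
end

section
/- Let n ≥ 1, let W be an n×n complex positive semidefinite matrix with trace equal to 1, and let x ∈ ℂⁿ satisfy xᴴWx = 0. Then for every g ∈ ℂⁿ there exists a unit vector u ∈ ℂⁿ such that xᴴu = 0 and gᴴWg ≤ |gᴴu|². -/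
open Matrix ComplexOrder

/-!
In an orthonormal eigenbasis `bᵢ` of `W`, `gᴴWg = ∑ λᵢ |gᴴbᵢ|²` is a convex combination of the
gains `|gᴴbᵢ|²`, since `λᵢ ≥ 0` and `∑ λᵢ = tr W = 1`; so some `bᵢ` with `λᵢ ≠ 0` has gain at least
`gᴴWg`. For positive semidefinite `W`, `xᴴWx = 0` forces `Wx = 0`, hence
`λᵢ (xᴴbᵢ) = xᴴWbᵢ = (Wx)ᴴbᵢ = 0` and `bᵢ` is orthogonal to `x`.
-/

lemma exists_ne_zero_and_sum_mul_le {ι : Type*} [Fintype ι] {w : ι → ℝ} (hw : ∀ i, 0 ≤ w i)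
    (hsum : ∑ i, w i = 1) (a : ι → ℝ) : ∃ i, w i ≠ 0 ∧ ∑ j, w j * a j ≤ a i := by
  set S := ∑ j, w j * a j
  by_contra! h
  obtain ⟨i, -, hi⟩ := Finset.exists_ne_zero_of_sum_ne_zero (hsum ▸ one_ne_zero)
  have hlt : S < ∑ j, w j * S := by
    refine Finset.sum_lt_sum (fun j _ => ?_) ⟨i, Finset.mem_univ i, ?_⟩
    · rcases eq_or_ne (w j) 0 with hj | hj
      · simp [hj]
      · exact mul_le_mul_of_nonneg_left (h j hj).le (hw j)
    · exact mul_lt_mul_of_pos_left (h i hi) ((hw i).lt_of_ne' hi)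
  rw [← Finset.sum_mul, hsum, one_mul] at hlt
  exact hlt.false

namespace Matrix.IsHermitian

variable {𝕜 n : Type*} [RCLike 𝕜] [Fintype n] [DecidableEq n] {A : Matrix n n 𝕜}
  (hA : A.IsHermitian)
include hA

lemma star_eigenvectorBasis_dotProduct_mulVec (i : n) (y : n → 𝕜) :
    star ⇑(hA.eigenvectorBasis i) ⬝ᵥ A *ᵥ y =
      hA.eigenvalues i * (star ⇑(hA.eigenvectorBasis i) ⬝ᵥ y) := by
  have h : star ⇑(hA.eigenvectorBasis i) ᵥ* A = star (A *ᵥ ⇑(hA.eigenvectorBasis i)) := by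
    rw [star_mulVec, hA.eq]
  rw [dotProduct_mulVec, h, mulVec_eigenvectorBasis, star_smul, smul_dotProduct,
    RCLike.real_smul_eq_coe_mul, star_trivial]

lemma dotProduct_mulVec_self_eq_sum (y : n → 𝕜) :
    star y ⬝ᵥ A *ᵥ y =
      ((∑ i, hA.eigenvalues i * ‖star y ⬝ᵥ ⇑(hA.eigenvectorBasis i)‖ ^ 2 : ℝ) : 𝕜) := by
  have := hA.eigenvectorBasis.sum_inner_mul_inner (WithLp.toLp 2 y) (WithLp.toLp 2 (A *ᵥ y))
  simp only [EuclideanSpace.inner_eq_star_dotProduct] at this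
  rw [dotProduct_comm, ← this]
  push_cast
  refine Finset.sum_congr rfl fun i _ => ?_
  rw [dotProduct_comm (A *ᵥ y), hA.star_eigenvectorBasis_dotProduct_mulVec, star_dotProduct,
    dotProduct_comm, RCLike.star_def, mul_left_comm, RCLike.mul_conj]

lemma eigenvectorBasis_dotProduct_eq_zero {x : n → 𝕜} (hx : A *ᵥ x = 0) {i : n}
    (hi : hA.eigenvalues i ≠ 0) : star x ⬝ᵥ ⇑(hA.eigenvectorBasis i) = 0 := by
  have h := hA.star_eigenvectorBasis_dotProduct_mulVec i x
  rw [hx, dotProduct_zero, eq_comm, mul_eq_zero, star_dotProduct, star_eq_zero] at h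
  exact h.resolve_left (RCLike.ofReal_ne_zero.mpr hi)

lemma sum_eigenvalues_eq_re_trace : ∑ i, hA.eigenvalues i = RCLike.re A.trace := by
  simp [hA.trace_eq_sum_eigenvalues]

end Matrix.IsHermitian

theorem stmt_6_general (n : ℕ) (W : Matrix (Fin n) (Fin n) ℂ)
    (hW : W.PosSemidef) (htr : W.trace = 1) (x : Fin n → ℂ)
    (hx : star x ⬝ᵥ W.mulVec x = 0) :
    ∀ g : Fin n → ℂ, ∃ u : EuclideanSpace ℂ (Fin n), ‖u‖ = 1 ∧
      star x ⬝ᵥ (u : Fin n → ℂ) = 0 ∧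
      (star g ⬝ᵥ W.mulVec g).re ≤ ‖star g ⬝ᵥ (u : Fin n → ℂ)‖ ^ 2 := by
  intro g
  have hA : W.IsHermitian := hW.isHermitian
  have hWx : W *ᵥ x = 0 := (hW.dotProduct_mulVec_zero_iff x).mp hx
  have hsum : ∑ i, hA.eigenvalues i = 1 := by
    simp [hA.sum_eigenvalues_eq_re_trace, htr]
  obtain ⟨i, hi, hle⟩ := exists_ne_zero_and_sum_mul_le hW.eigenvalues_nonneg hsum
    fun i => ‖star g ⬝ᵥ ⇑(hA.eigenvectorBasis i)‖ ^ 2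
  refine ⟨hA.eigenvectorBasis i, hA.eigenvectorBasis.orthonormal.1 i,
    hA.eigenvectorBasis_dotProduct_eq_zero hWx hi, ?_⟩
  rw [hA.dotProduct_mulVec_self_eq_sum g]
  exact_mod_cast hle

/-- If `W` is positive semidefinite with unit trace and `xᴴWx = 0`, then for
every `g` there is a unit vector `u` orthogonal to `x` with `gᴴWg ≤ |gᴴu|²`. -/
theorem stmt_6 (n : ℕ) (hn : 1 ≤ n) (W : Matrix (Fin n) (Fin n) ℂ)
    (hW : W.PosSemidef) (htr : W.trace = 1) (x : Fin n → ℂ)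
    (hx : star x ⬝ᵥ W.mulVec x = 0) :
    ∀ g : Fin n → ℂ, ∃ u : EuclideanSpace ℂ (Fin n), ‖u‖ = 1 ∧
      star x ⬝ᵥ (u : Fin n → ℂ) = 0 ∧
      (star g ⬝ᵥ W.mulVec g).re ≤ ‖star g ⬝ᵥ (u : Fin n → ℂ)‖ ^ 2 :=
  stmt_6_general n W hW htr x hx
end

section
/- Let a > 0. The function g_a : [0,1) → ℝ defined by g_a(α) = (1−α)·log₂(1 + aα/(1−α)) is strictly concave on the interval [0,1). -/
/-!
With `x(α) = α / (1 - α)` the function is `(1 - α) · φ(x(α))` for `φ(x) = log₂(1 + a x)`, which is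
strictly concave on `[0, ∞)`: it is the perspective `(s, t) ↦ t · φ(s / t)` of `φ` restricted to the
line `s + t = 1`. For `γ = pα + qβ` the point `x(γ)` is the convex combination of `x(α)` and `x(β)`
with weights `p(1 - α)/(1 - γ)` and `q(1 - β)/(1 - γ)`, so strict concavity of `φ`, multiplied
through by `1 - γ`, gives strict concavity of the function.
-/

open Real Set

theorem strictConcaveOn_logb_one_add_mul {b a : ℝ} (hb : 1 < b) (ha : 0 < a) :
    StrictConcaveOn ℝ (Ici 0) fun x => logb b (1 + a * x) := by
  refine ⟨convex_Ici 0, fun x hx y hy hxy p q hp hq hpq => ?_⟩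
  have hx' : 1 + a * x ∈ Ioi 0 := by rw [mem_Ici] at hx; rw [mem_Ioi]; positivity
  have hy' : 1 + a * y ∈ Ioi 0 := by rw [mem_Ici] at hy; rw [mem_Ioi]; positivity
  have hxy' : 1 + a * x ≠ 1 + a * y := by simpa [ha.ne'] using hxy
  have hlog := strictConcaveOn_log_Ioi.2 hx' hy' hxy' hp hq hpq
  have hcombo : p • (1 + a * x) + q • (1 + a * y) = 1 + a * (p • x + q • y) := by
    simp only [smul_eq_mul]; linear_combination hpq
  rw [hcombo] at hlog
  simp only [smul_eq_mul, logb] at hlog ⊢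
  rw [← mul_div_assoc, ← mul_div_assoc, ← add_div]
  exact div_lt_div_of_pos_right hlog (log_pos hb)

theorem StrictConcaveOn.perspective_Ico {φ : ℝ → ℝ} (hφ : StrictConcaveOn ℝ (Ici 0) φ) :
    StrictConcaveOn ℝ (Ico 0 1) fun α => (1 - α) * φ (α / (1 - α)) := by
  refine ⟨convex_Ico 0 1, fun α hα β hβ hαβ p q hp hq hpq => ?_⟩
  obtain ⟨hα₀, hα₁⟩ := hα
  obtain ⟨hβ₀, hβ₁⟩ := hβ
  simp only [smul_eq_mul]
  set γ := p * α + q * β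
  have hu : 0 < 1 - α := sub_pos.2 hα₁
  have hv : 0 < 1 - β := sub_pos.2 hβ₁
  have hw : 1 - γ = p * (1 - α) + q * (1 - β) := by linear_combination -hpq
  have hw_pos : 0 < 1 - γ := by rw [hw]; positivity
  have hne : α / (1 - α) ≠ β / (1 - β) := by
    rw [Ne, div_eq_div_iff hu.ne' hv.ne']
    contrapose! hαβ
    linarith
  have hsum : p * (1 - α) / (1 - γ) + q * (1 - β) / (1 - γ) = 1 := by
    rw [← add_div, ← hw, div_self hw_pos.ne']
  have hpoint : p * (1 - α) / (1 - γ) * (α / (1 - α)) + q * (1 - β) / (1 - γ) * (β / (1 - β))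
      = γ / (1 - γ) := by
    field_simp
    rfl
  have hφγ := hφ.2 (div_nonneg hα₀ hu.le) (div_nonneg hβ₀ hv.le) hne
    (by positivity) (by positivity) hsum
  simp only [smul_eq_mul, hpoint] at hφγ
  calc p * ((1 - α) * φ (α / (1 - α))) + q * ((1 - β) * φ (β / (1 - β)))
      = (1 - γ) * (p * (1 - α) / (1 - γ) * φ (α / (1 - α))
          + q * (1 - β) / (1 - γ) * φ (β / (1 - β))) := by
        field_simp
    _ < (1 - γ) * φ (γ / (1 - γ)) := mul_lt_mul_of_pos_left hφγ hw_pos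

/-- For `a > 0`, the throughput function `α ↦ (1−α)·log₂(1 + aα/(1−α))` is
strictly concave on `[0,1)`. -/
theorem stmt_9 (a : ℝ) (ha : 0 < a) :
    StrictConcaveOn ℝ (Set.Ico (0 : ℝ) 1)
      (fun α => (1 - α) * Real.logb 2 (1 + a * α / (1 - α))) := by
  simpa only [mul_div_assoc] using
    (strictConcaveOn_logb_one_add_mul one_lt_two ha).perspective_Ico
end

section
/- Let a > 0 and define g_a : [0,1) → ℝ by g_a(α) = (1−α)·log₂(1 + aα/(1−α)). Then there exists a unique α* ∈ (0,1) satisfying ln(1 + aα*/(1−α*)) = a/(1−α* + aα*) (ln the natural logarithm), and g_a attains its maximum over [0,1) at α*. -/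
/-!
Write `g(x) = (1 - x) log(1 + a x / (1 - x))` for the throughput measured in nats. Its derivative
is `h(x) = a / (1 - x + a x) - log(1 + a x / (1 - x))`, and `h'(x) = -a² / ((1 - x)(1 - x + a x)²)`,
so `h` is strictly decreasing on `[0, 1)`. Since `h 0 = a > 0` and `h` is negative once
`a x / (1 - x) ≥ exp (a + 1)`, `h` has exactly one zero `α*` in `(0, 1)`, which is where the
stationarity equation holds; `g` increases before `α*` and decreases after it.
-/

open Real Set

noncomputable def throughputNat (a x : ℝ) : ℝ :=
  (1 - x) * log (1 + a * x / (1 - x))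

noncomputable def throughputDeriv (a x : ℝ) : ℝ :=
  a / (1 - x + a * x) - log (1 + a * x / (1 - x))

section

variable {a x : ℝ}

lemma one_sub_add_mul_pos (ha : 0 ≤ a) (hx0 : 0 ≤ x) (hx1 : x < 1) : 0 < 1 - x + a * x := by
  nlinarith

lemma one_add_mul_div_one_sub_pos (ha : 0 ≤ a) (hx0 : 0 ≤ x) (hx1 : x < 1) :
    0 < 1 + a * x / (1 - x) := by
  have : 0 < 1 - x := by linarith
  positivity

lemma hasDerivAt_log_one_add_mul_div_one_sub (ha : 0 ≤ a) (hx0 : 0 ≤ x) (hx1 : x < 1) :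
    HasDerivAt (fun y => log (1 + a * y / (1 - y))) (a / ((1 - x) * (1 - x + a * x))) x := by
  have h1x : 1 - x ≠ 0 := by linarith
  have hD := (one_sub_add_mul_pos ha hx0 hx1).ne'
  have hquot : HasDerivAt (fun y => 1 + a * y / (1 - y))
      ((a * (1 - x) - a * x * (-1)) / (1 - x) ^ 2) x := by
    simpa using
      (((hasDerivAt_id' x).const_mul a).fun_div ((hasDerivAt_id' x).const_sub 1) h1x).const_add 1
  refine (hquot.log (one_add_mul_div_one_sub_pos ha hx0 hx1).ne').congr_deriv ?_
  field_simp
  ring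

lemma hasDerivAt_throughputNat (ha : 0 ≤ a) (hx0 : 0 ≤ x) (hx1 : x < 1) :
    HasDerivAt (throughputNat a) (throughputDeriv a x) x := by
  have h1x : 1 - x ≠ 0 := by linarith
  have hD := (one_sub_add_mul_pos ha hx0 hx1).ne'
  refine (((hasDerivAt_id' x).const_sub 1).fun_mul
    (hasDerivAt_log_one_add_mul_div_one_sub ha hx0 hx1)).congr_deriv ?_
  rw [throughputDeriv]
  field_simp
  ring

lemma hasDerivAt_throughputDeriv (ha : 0 ≤ a) (hx0 : 0 ≤ x) (hx1 : x < 1) :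
    HasDerivAt (throughputDeriv a) (-a ^ 2 / ((1 - x) * (1 - x + a * x) ^ 2)) x := by
  have h1x : 1 - x ≠ 0 := by linarith
  have hD := (one_sub_add_mul_pos ha hx0 hx1).ne'
  have hlin : HasDerivAt (fun y => 1 - y + a * y) (-1 + a) x := by
    simpa using ((hasDerivAt_id' x).const_sub 1).fun_add ((hasDerivAt_id' x).const_mul a)
  refine (((hasDerivAt_const x a).fun_div hlin hD).fun_sub
    (hasDerivAt_log_one_add_mul_div_one_sub ha hx0 hx1)).congr_deriv ?_
  field_simp
  ring

lemma strictAntiOn_throughputDeriv (ha : 0 < a) : StrictAntiOn (throughputDeriv a) (Ico 0 1) := by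
  refine strictAntiOn_of_hasDerivWithinAt_neg (convex_Ico 0 1)
    (f' := fun x => -a ^ 2 / ((1 - x) * (1 - x + a * x) ^ 2))
    (fun x hx => (hasDerivAt_throughputDeriv ha.le hx.1 hx.2).continuousAt.continuousWithinAt)
    (fun x hx => ?_) (fun x hx => ?_)
  all_goals rw [interior_Ico] at hx
  · exact (hasDerivAt_throughputDeriv ha.le hx.1.le hx.2).hasDerivWithinAt
  · have h1x : 0 < 1 - x := by linarith [hx.2]
    have hD := one_sub_add_mul_pos ha.le hx.1.le hx.2
    exact div_neg_of_neg_of_pos (neg_neg_of_pos (by positivity)) (by positivity)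

lemma throughputDeriv_zero (a : ℝ) : throughputDeriv a 0 = a := by
  simp [throughputDeriv]

lemma throughputDeriv_neg_of_exp_le (ha : 0 < a) (hx0 : 0 ≤ x) (hx1 : x < 1)
    (hx : exp (a + 1) ≤ a * x / (1 - x)) : throughputDeriv a x < 0 := by
  have hD := one_sub_add_mul_pos ha.le hx0 hx1
  have hfrac : a / (1 - x + a * x) < a + 1 := by
    rw [div_lt_iff₀ hD]
    nlinarith [mul_nonneg (sq_nonneg a) hx0]
  have hlog : a + 1 < log (1 + a * x / (1 - x)) := by
    rw [← log_exp (a + 1)]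
    exact log_lt_log (exp_pos _) (by linarith)
  rw [throughputDeriv]
  linarith

lemma exists_throughputDeriv_neg (ha : 0 < a) : ∃ x ∈ Ioo (0 : ℝ) 1, throughputDeriv a x < 0 := by
  obtain ⟨E, hE, hE_def⟩ : ∃ E, 0 < E ∧ E = exp (a + 1) := ⟨_, exp_pos _, rfl⟩
  have haE : 0 < a + E := by positivity
  have hx1 : E / (a + E) < 1 := by rw [div_lt_one haE]; linarith
  refine ⟨E / (a + E), ⟨by positivity, hx1⟩,
    throughputDeriv_neg_of_exp_le ha (by positivity) hx1 ?_⟩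
  rw [← hE_def]
  apply le_of_eq
  field_simp [ha.ne']
  ring

lemma existsUnique_throughputDeriv_eq_zero (ha : 0 < a) :
    ∃! x, x ∈ Ioo (0 : ℝ) 1 ∧ throughputDeriv a x = 0 := by
  obtain ⟨x₁, hx₁, hneg⟩ := exists_throughputDeriv_neg ha
  have hcont : ContinuousOn (throughputDeriv a) (Icc 0 x₁) := fun x hx =>
    (hasDerivAt_throughputDeriv ha.le hx.1 (hx.2.trans_lt hx₁.2)).continuousAt.continuousWithinAt
  have hzero : (0 : ℝ) ∈ Icc (throughputDeriv a x₁) (throughputDeriv a 0) :=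
    ⟨hneg.le, (throughputDeriv_zero a).symm ▸ ha.le⟩
  obtain ⟨x, ⟨hx0, hxx₁⟩, hx⟩ := intermediate_value_Icc' hx₁.1.le hcont hzero
  have hx0' : 0 < x := hx0.lt_of_ne (by rintro rfl; simp [throughputDeriv_zero, ha.ne'] at hx)
  refine ⟨x, ⟨⟨hx0', hxx₁.trans_lt hx₁.2⟩, hx⟩, fun y ⟨hy, hy0⟩ => ?_⟩
  exact (strictAntiOn_throughputDeriv ha).injOn ⟨hy.1.le, hy.2⟩ ⟨hx0, hxx₁.trans_lt hx₁.2⟩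
    (hy0.trans hx.symm)

lemma isMaxOn_throughputNat (ha : 0 < a) (hx : x ∈ Ioo (0 : ℝ) 1) (hx0 : throughputDeriv a x = 0) :
    IsMaxOn (throughputNat a) (Ico 0 1) x := by
  have hderiv : ∀ y ∈ Ioo (0 : ℝ) 1, deriv (throughputNat a) y = throughputDeriv a y :=
    fun y hy => (hasDerivAt_throughputNat ha.le hy.1.le hy.2).deriv
  have hdiff : DifferentiableOn ℝ (throughputNat a) (Ioo 0 1) := fun y hy =>
    (hasDerivAt_throughputNat ha.le hy.1.le hy.2).differentiableAt.differentiableWithinAt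
  have hanti := strictAntiOn_throughputDeriv ha
  refine isMaxOn_Ico_of_deriv (hasDerivAt_throughputNat ha.le le_rfl one_pos).continuousAt
    (hasDerivAt_throughputNat ha.le hx.1.le hx.2).continuousAt
    (hdiff.mono (Ioo_subset_Ioo_right hx.2.le)) (hdiff.mono (Ioo_subset_Ioo_left hx.1.le))
    (fun y hy => ?_) (fun y hy => ?_)
  · rw [hderiv y ⟨hy.1, hy.2.trans hx.2⟩, ← hx0]
    exact (hanti ⟨hy.1.le, hy.2.trans hx.2⟩ ⟨hx.1.le, hx.2⟩ hy.2).le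
  · rw [hderiv y ⟨hx.1.trans hy.1, hy.2⟩, ← hx0]
    exact (hanti ⟨hx.1.le, hx.2⟩ ⟨(hx.1.trans hy.1).le, hy.2⟩ hy.1).le

end

/-- For `a > 0`, there is a unique `α* ∈ (0,1)` with
`ln(1 + aα*/(1−α*)) = a/(1−α* + aα*)`, and the throughput
`g_a(α) = (1−α)·log₂(1 + aα/(1−α))` attains its maximum over `[0,1)` there. -/
theorem stmt_10 (a : ℝ) (ha : 0 < a) :
    (∃! α : ℝ, α ∈ Set.Ioo (0 : ℝ) 1 ∧
      Real.log (1 + a * α / (1 - α)) = a / (1 - α + a * α)) ∧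
    (∀ α : ℝ, α ∈ Set.Ioo (0 : ℝ) 1 →
      Real.log (1 + a * α / (1 - α)) = a / (1 - α + a * α) →
      ∀ β ∈ Set.Ico (0 : ℝ) 1,
        (1 - β) * Real.logb 2 (1 + a * β / (1 - β)) ≤
          (1 - α) * Real.logb 2 (1 + a * α / (1 - α))) := by
  have stationary_iff (x : ℝ) :
      log (1 + a * x / (1 - x)) = a / (1 - x + a * x) ↔ throughputDeriv a x = 0 := by
    rw [throughputDeriv, sub_eq_zero, eq_comm]
  refine ⟨by simpa only [stationary_iff] using existsUnique_throughputDeriv_eq_zero ha,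
    fun α hα hstat β hβ => ?_⟩
  have hmax := isMaxOn_throughputNat ha hα ((stationary_iff α).1 hstat) hβ
  simp only [logb, ← mul_div_assoc]
  exact div_le_div_of_nonneg_right hmax (log_nonneg one_le_two)
end

section
/- Let A > 0 and B > 0, and define R : (0,1) → ℝ by R(α) = (1−α)·log₂(1 + min(A, Bα/(1−α))). Let α* be the unique point of (0,1) satisfying ln(1 + Bα*/(1−α*)) = B/(1−α* + Bα*). Then R attains its maximum over (0,1) at the point α̂ = min(α*, A/(A+B)). -/
/-!
With `x(α) = Bα/(1-α)` and `f(α) = (1-α)·ln(1 + x(α))`, `R·ln 2 = min(f(α), (1-α)·ln(1+A))`.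
The tangent-line bound `ln y ≤ y/c - 1 + ln c`, multiplied by `1 - α`, becomes affine in `α`
because `(1-α)(1 + x(α)) = 1 - α + Bα`; hence `f` lies below its tangent line at every point,
with slope `s(β) = B/(1-β+Bβ) - ln(1 + x(β))`. Consequently `f` is maximal at the stationary
point `α*`, and `s` is antitone. If `α* ≤ A/(A+B)` the cap is inactive at `α*`. Otherwise
`s(t) ≥ s(α*) = 0` at `t = A/(A+B)`, so `f ≤ f(t)` left of `t`, while right of `t` the capped
branch `(1-α)·ln(1+A)` decreases.
-/

open Set

lemma Real.log_le_div_sub_one_add_log {x c : ℝ} (hx : 0 < x) (hc : 0 < c) :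
    Real.log x ≤ x / c - 1 + Real.log c := by
  have h := Real.log_le_sub_one_of_pos (div_pos hx hc)
  rw [Real.log_div hx.ne' hc.ne'] at h
  linarith

section OneSubRatio

variable {A B α : ℝ}

lemma mul_div_one_sub_nonneg (hB : 0 ≤ B) (hα : α ∈ Ico 0 1) : 0 ≤ B * α / (1 - α) :=
  div_nonneg (mul_nonneg hB hα.1) (by linarith [hα.2])

lemma mul_div_one_sub_le_iff (hAB : 0 < A + B) (hα : α < 1) :
    B * α / (1 - α) ≤ A ↔ α ≤ A / (A + B) := by
  rw [div_le_iff₀ (by linarith), le_div_iff₀ hAB]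
  constructor <;> intro h <;> linarith

lemma mul_div_one_sub_div_add_self (hB : B ≠ 0) (hAB : A + B ≠ 0) :
    B * (A / (A + B)) / (1 - A / (A + B)) = A := by
  rw [one_sub_div hAB, add_sub_cancel_left]
  field_simp

end OneSubRatio

namespace TimeSplit

noncomputable def concaveRate (B α : ℝ) : ℝ :=
  (1 - α) * Real.log (1 + B * α / (1 - α))

/-- The derivative of `concaveRate B` at `α`. -/
noncomputable def rateSlope (B α : ℝ) : ℝ :=
  B / (1 - α + B * α) - Real.log (1 + B * α / (1 - α))

/-- The paper's `R(α)`, measured in nats instead of bits. -/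
noncomputable def rate (A B α : ℝ) : ℝ :=
  (1 - α) * Real.log (1 + min A (B * α / (1 - α)))

variable {A B α β αstar : ℝ}

theorem concaveRate_le_tangent (hB : 0 ≤ B) (hα : α ∈ Ico 0 1) (hβ : β ∈ Ico 0 1) :
    concaveRate B α ≤ concaveRate B β + (α - β) * rateSlope B β := by
  have hα1 : 0 < 1 - α := by linarith [hα.2]
  have hβ1 : 0 < 1 - β := by linarith [hβ.2]
  have hD : 0 < 1 - β + B * β := by nlinarith [hβ.1]
  have htangent := Real.log_le_div_sub_one_add_log (x := 1 + B * α / (1 - α))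
    (c := 1 + B * β / (1 - β)) (by linarith [mul_div_one_sub_nonneg hB hα])
    (by linarith [mul_div_one_sub_nonneg hB hβ])
  calc concaveRate B α
      ≤ (1 - α) * ((1 + B * α / (1 - α)) / (1 + B * β / (1 - β)) - 1
          + Real.log (1 + B * β / (1 - β))) :=
        mul_le_mul_of_nonneg_left htangent hα1.le
    _ = concaveRate B β + (α - β) * rateSlope B β := by
        unfold concaveRate rateSlope
        field_simp
        ring

theorem concaveRate_le_of_rateSlope_eq_zero (hB : 0 ≤ B) (hα : α ∈ Ico 0 1)
    (hβ : β ∈ Ico 0 1) (hslope : rateSlope B β = 0) : concaveRate B α ≤ concaveRate B β := by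
  simpa [hslope] using concaveRate_le_tangent hB hα hβ

theorem rateSlope_antitoneOn (hB : 0 ≤ B) : AntitoneOn (rateSlope B) (Ico 0 1) := by
  intro α hα β hβ hαβ
  rcases hαβ.eq_or_lt with rfl | hlt
  · rfl
  have hαβ' := concaveRate_le_tangent hB hα hβ
  have hβα := concaveRate_le_tangent hB hβ hα
  have : (β - α) * rateSlope B β ≤ (β - α) * rateSlope B α := by linarith
  exact le_of_mul_le_mul_left this (sub_pos.2 hlt)

lemma rate_le_concaveRate (hA : 0 ≤ A) (hB : 0 ≤ B) (hα : α ∈ Ico 0 1) :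
    rate A B α ≤ concaveRate B α :=
  mul_le_mul_of_nonneg_left
    (Real.log_le_log (by linarith [le_min hA (mul_div_one_sub_nonneg hB hα)])
      (by linarith [min_le_right A (B * α / (1 - α))]))
    (by linarith [hα.2])

lemma rate_le_capped (hA : 0 ≤ A) (hB : 0 ≤ B) (hα : α ∈ Ico 0 1) :
    rate A B α ≤ (1 - α) * Real.log (1 + A) :=
  mul_le_mul_of_nonneg_left
    (Real.log_le_log (by linarith [le_min hA (mul_div_one_sub_nonneg hB hα)])
      (by linarith [min_le_left A (B * α / (1 - α))]))
    (by linarith [hα.2])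

lemma rate_eq_concaveRate (h : B * α / (1 - α) ≤ A) : rate A B α = concaveRate B α := by
  rw [rate, concaveRate, min_eq_right h]

theorem rate_le_rate_of_le_threshold (hA : 0 ≤ A) (hB : 0 < B) (hαstar : αstar ∈ Ico 0 1)
    (hslope : rateSlope B αstar = 0) (hle : αstar ≤ A / (A + B)) (hα : α ∈ Ico 0 1) :
    rate A B α ≤ rate A B αstar := by
  rw [rate_eq_concaveRate ((mul_div_one_sub_le_iff (by linarith) hαstar.2).2 hle)]
  exact (rate_le_concaveRate hA hB.le hα).trans
    (concaveRate_le_of_rateSlope_eq_zero hB.le hα hαstar hslope)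

theorem rate_le_rate_threshold (hA : 0 ≤ A) (hB : 0 < B) (hαstar : αstar ∈ Ico 0 1)
    (hslope : rateSlope B αstar = 0) (hlt : A / (A + B) < αstar) (hα : α ∈ Ico 0 1) :
    rate A B α ≤ rate A B (A / (A + B)) := by
  set t := A / (A + B)
  have ht : t ∈ Ico 0 1 := ⟨by positivity, hlt.trans hαstar.2⟩
  have hxt : B * t / (1 - t) = A := mul_div_one_sub_div_add_self hB.ne' (by linarith)
  rcases le_or_gt α t with hαt | htα
  · have hslope_t : 0 ≤ rateSlope B t := hslope ▸ rateSlope_antitoneOn hB.le ht hαstar hlt.le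
    rw [rate_eq_concaveRate hxt.le]
    calc rate A B α ≤ concaveRate B α := rate_le_concaveRate hA hB.le hα
      _ ≤ concaveRate B t + (α - t) * rateSlope B t := concaveRate_le_tangent hB.le hα ht
      _ ≤ concaveRate B t :=
          add_le_of_nonpos_right (mul_nonpos_of_nonpos_of_nonneg (by linarith) hslope_t)
  · calc rate A B α ≤ (1 - α) * Real.log (1 + A) := rate_le_capped hA hB.le hα
      _ ≤ (1 - t) * Real.log (1 + A) :=
          mul_le_mul_of_nonneg_right (by linarith) (Real.log_nonneg (by linarith))
      _ = rate A B t := by rw [rate, hxt, min_self]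

end TimeSplit

theorem stmt_11_general (A B : ℝ) (hA : 0 < A) (hB : 0 < B)
    (αstar : ℝ) (hαstar : αstar ∈ Set.Ioo (0 : ℝ) 1)
    (hstat : Real.log (1 + B * αstar / (1 - αstar)) = B / (1 - αstar + B * αstar)) :
    min αstar (A / (A + B)) ∈ Set.Ioo (0 : ℝ) 1 ∧
    ∀ α ∈ Set.Ioo (0 : ℝ) 1,
      (1 - α) * Real.logb 2 (1 + min A (B * α / (1 - α))) ≤
        (1 - min αstar (A / (A + B))) *
          Real.logb 2 (1 + min A (B * min αstar (A / (A + B)) /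
            (1 - min αstar (A / (A + B))))) := by
  have hslope : TimeSplit.rateSlope B αstar = 0 := sub_eq_zero.2 hstat.symm
  have hαstar' := Ioo_subset_Ico_self hαstar
  refine ⟨⟨lt_min hαstar.1 (by positivity), (min_le_left _ _).trans_lt hαstar.2⟩, fun α hα => ?_⟩
  have hrate : TimeSplit.rate A B α ≤ TimeSplit.rate A B (min αstar (A / (A + B))) := by
    rcases le_or_gt αstar (A / (A + B)) with hle | hlt
    · rw [min_eq_left hle]
      exact TimeSplit.rate_le_rate_of_le_threshold hA.le hB hαstar' hslope hle
        (Ioo_subset_Ico_self hα)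
    · rw [min_eq_right hlt.le]
      exact TimeSplit.rate_le_rate_threshold hA.le hB hαstar' hslope hlt (Ioo_subset_Ico_self hα)
  simp only [Real.logb, ← mul_div_assoc]
  exact div_le_div_of_nonneg_right hrate (Real.log_pos one_lt_two).le

/-- Optimal time-split for the TZF/RZF schemes: with
`R(α) = (1−α)·log₂(1 + min(A, Bα/(1−α)))` and `α*` the stationary point of the
concave branch, the maximum of `R` over `(0,1)` is attained at
`min(α*, A/(A+B))`. -/
theorem stmt_11 (A B : ℝ) (hA : 0 < A) (hB : 0 < B)
    (αstar : ℝ) (hαstar : αstar ∈ Set.Ioo (0 : ℝ) 1)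
    (hstat : Real.log (1 + B * αstar / (1 - αstar)) = B / (1 - αstar + B * αstar))
    (huniq : ∀ α ∈ Set.Ioo (0 : ℝ) 1,
      Real.log (1 + B * α / (1 - α)) = B / (1 - α + B * α) → α = αstar) :
    min αstar (A / (A + B)) ∈ Set.Ioo (0 : ℝ) 1 ∧
    ∀ α ∈ Set.Ioo (0 : ℝ) 1,
      (1 - α) * Real.logb 2 (1 + min A (B * α / (1 - α))) ≤
        (1 - min αstar (A / (A + B))) *
          Real.logb 2 (1 + min A (B * min αstar (A / (A + B)) /
            (1 - min αstar (A / (A + B))))) :=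
  stmt_11_general A B hA hB αstar hαstar hstat
end

section
/- Let f > 0 and let b₁, b₂ be reals with 0 ≤ b₁ ≤ b₂ and b₂ > 0. Then the function α ↦ (1−α)·log₂(1 + f·(1 − αb₁/(1−α+αb₂))) is strictly decreasing on the interval [0,1). -/
/-!
The factor `1 - α` is positive and strictly decreasing on `[0, 1)`. The ratio
`α b₁ / (1 - α + α b₂)` is nondecreasing there (its derivative is `b₁ / (1 - α + α b₂)²`)
and stays below `1` because `b₁ ≤ b₂`, so the logarithmic factor is nonincreasing with
argument in `(1, 1 + f]`, hence positive. A strictly decreasing nonnegative function times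
a nonincreasing positive one is strictly decreasing.
-/

open Set

lemma StrictAntiOn.mul_antitoneOn {α M : Type*} [Preorder α] [MulZeroClass M] [PartialOrder M]
    [PosMulMono M] [MulPosStrictMono M] {f g : α → M} {s : Set α}
    (hf : StrictAntiOn f s) (hg : AntitoneOn g s) (hf₀ : ∀ x ∈ s, 0 ≤ f x)
    (hg₀ : ∀ x ∈ s, 0 < g x) : StrictAntiOn (f * g) s := fun _ hx _ hy h ↦
  mul_lt_mul (hf hx hy h) (hg hx hy h.le) (hg₀ _ hy) (hf₀ _ hx)

section TimeSplit

variable {f b₁ b₂ : ℝ}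

lemma one_sub_add_mul_pos_s12 (hb₂ : 0 ≤ b₂) {α : ℝ} (hα : α ∈ Ico (0 : ℝ) 1) :
    0 < 1 - α + α * b₂ := by
  nlinarith [hα.1, hα.2]

lemma mul_div_one_sub_add_mul_lt_one (hb₁ : 0 ≤ b₁) (hb₁₂ : b₁ ≤ b₂) {α : ℝ}
    (hα : α ∈ Ico (0 : ℝ) 1) : α * b₁ / (1 - α + α * b₂) < 1 := by
  rw [div_lt_one (one_sub_add_mul_pos_s12 (hb₁.trans hb₁₂) hα)]
  nlinarith [hα.1, hα.2]

lemma monotoneOn_mul_div_one_sub_add_mul (hb₁ : 0 ≤ b₁) (hb₂ : 0 ≤ b₂) :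
    MonotoneOn (fun α : ℝ ↦ α * b₁ / (1 - α + α * b₂)) (Ico 0 1) := by
  intro x hx y hy hxy
  rw [div_le_div_iff₀ (one_sub_add_mul_pos_s12 hb₂ hx) (one_sub_add_mul_pos_s12 hb₂ hy)]
  -- cross-multiplying leaves `x * b₁ ≤ y * b₁`
  nlinarith

lemma antitoneOn_logb_one_add_mul_one_sub (hf : 0 ≤ f) (hb₁ : 0 ≤ b₁) (hb₁₂ : b₁ ≤ b₂) :
    AntitoneOn (fun α : ℝ ↦ Real.logb 2 (1 + f * (1 - α * b₁ / (1 - α + α * b₂)))) (Ico 0 1) := by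
  intro x hx y hy hxy
  have hr := monotoneOn_mul_div_one_sub_add_mul hb₁ (hb₁.trans hb₁₂) hx hy hxy
  have hry := mul_div_one_sub_add_mul_lt_one hb₁ hb₁₂ hy
  refine Real.logb_le_logb_of_le one_lt_two (by nlinarith) ?_
  nlinarith

lemma logb_one_add_mul_one_sub_pos (hf : 0 < f) (hb₁ : 0 ≤ b₁) (hb₁₂ : b₁ ≤ b₂) {α : ℝ}
    (hα : α ∈ Ico (0 : ℝ) 1) : 0 < Real.logb 2 (1 + f * (1 - α * b₁ / (1 - α + α * b₂))) := by
  have hr := mul_div_one_sub_add_mul_lt_one hb₁ hb₁₂ hα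
  exact Real.logb_pos one_lt_two (by nlinarith)

end TimeSplit

theorem stmt_12_general (f b₁ b₂ : ℝ) (hf : 0 < f) (hb₁ : 0 ≤ b₁) (hb₁₂ : b₁ ≤ b₂) :
    StrictAntiOn
      (fun α : ℝ => (1 - α) * Real.logb 2 (1 + f * (1 - α * b₁ / (1 - α + α * b₂))))
      (Set.Ico (0 : ℝ) 1) := by
  have hlin : StrictAntiOn (fun α : ℝ ↦ 1 - α) (Ico 0 1) := fun _ _ _ _ h ↦ by linarith
  exact hlin.mul_antitoneOn (antitoneOn_logb_one_add_mul_one_sub hf.le hb₁ hb₁₂)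
    (fun _ hα ↦ by linarith [hα.2]) (fun _ hα ↦ logb_one_add_mul_one_sub_pos hf hb₁ hb₁₂ hα)

/-- For `f > 0` and `0 ≤ b₁ ≤ b₂` with `b₂ > 0`, the function
`α ↦ (1−α)·log₂(1 + f·(1 − αb₁/(1−α+αb₂)))` is strictly decreasing on `[0,1)`. -/
theorem stmt_12 (f b₁ b₂ : ℝ) (hf : 0 < f) (hb₁ : 0 ≤ b₁) (hb₁₂ : b₁ ≤ b₂)
    (hb₂ : 0 < b₂) :
    StrictAntiOn
      (fun α : ℝ => (1 - α) * Real.logb 2 (1 + f * (1 - α * b₁ / (1 - α + α * b₂))))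
      (Set.Ico (0 : ℝ) 1) :=
  stmt_12_general f b₁ b₂ hf hb₁ hb₁₂
end

section
/- Let b₀ > 0, b₂ > 0 and 0 ≤ b₁ ≤ b₂, and define α₀ = ((b₂−b₁−b₀) + √(b₀² + (b₂−b₁)² + 2b₀(b₁+b₂))) / (2b₀b₂). Then for every α ∈ (0,1), the inequality b₀α/(1−α) < 1 − αb₁/(1−α+αb₂) holds if and only if α < α₀/(1+α₀). -/
/-!
With `β = α / (1 - α)` the inequality becomes `b₀ b₂ β² + (b₀ + b₁ - b₂) β - 1 < 0`. This quadratic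
has roots of opposite signs, so for `β > 0` it is negative exactly below its positive root, which is
`α₀`; and `β < α₀` is the same as `α < α₀ / (1 + α₀)`.
-/

theorem abs_lt_sqrt_sq_add {p d : ℝ} (hd : 0 < d) : |p| < √(p ^ 2 + d) :=
  Real.lt_sqrt_of_sq_lt (by rw [sq_abs]; linarith)

theorem quadratic_neg_iff_lt_root {a p c x : ℝ} (ha : 0 < a) (hc : 0 < c) (hx : 0 ≤ x) :
    a * x ^ 2 + p * x - c < 0 ↔ x < (-p + √(p ^ 2 + 4 * a * c)) / (2 * a) := by
  set s := √(p ^ 2 + 4 * a * c)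
  have hs : s ^ 2 = p ^ 2 + 4 * a * c := Real.sq_sqrt (by positivity)
  have hps : 0 < p + s := by
    linarith [neg_abs_le p, abs_lt_sqrt_sq_add (p := p) (by positivity : 0 < 4 * a * c)]
  have hfactor : -(a * x ^ 2 + p * x - c) =
      ((-p + s) / (2 * a) - x) * ((2 * a * x + (p + s)) / 2) := by
    field_simp
    linear_combination -hs
  rw [← neg_pos, ← sub_pos (b := x), hfactor]
  exact mul_pos_iff_of_pos_right (half_pos (add_pos_of_nonneg_of_pos (by positivity) hps))

theorem quadratic_root_pos {a p c : ℝ} (ha : 0 < a) (hc : 0 < c) :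
    0 < (-p + √(p ^ 2 + 4 * a * c)) / (2 * a) := by
  have := abs_lt_sqrt_sq_add (p := p) (by positivity : 0 < 4 * a * c)
  exact div_pos (by linarith [le_abs_self p]) (by positivity)

theorem lt_div_one_add_iff {α t : ℝ} (hα : α < 1) (ht : 0 < 1 + t) :
    α < t / (1 + t) ↔ α / (1 - α) < t := by
  rw [lt_div_iff₀ ht, div_lt_iff₀ (sub_pos.mpr hα)]
  constructor <;> intro h <;> linarith

theorem mul_lt_one_sub_div_iff {b₀ b₁ b₂ β : ℝ} (h : 0 < 1 + β * b₂) :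
    b₀ * β < 1 - β * b₁ / (1 + β * b₂) ↔ b₀ * b₂ * β ^ 2 + (b₀ + b₁ - b₂) * β - 1 < 0 := by
  have hdiff : 1 - β * b₁ / (1 + β * b₂) - b₀ * β =
      -(b₀ * b₂ * β ^ 2 + (b₀ + b₁ - b₂) * β - 1) / (1 + β * b₂) := by
    field_simp
    ring
  rw [← sub_pos, hdiff, div_pos_iff_of_pos_right h, neg_pos]

theorem branch_ineq_iff_quadratic {b₀ b₁ b₂ α : ℝ} (hb₂ : 0 ≤ b₂) (hα : α ∈ Set.Ico (0 : ℝ) 1) :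
    b₀ * α / (1 - α) < 1 - α * b₁ / (1 - α + α * b₂) ↔
      b₀ * b₂ * (α / (1 - α)) ^ 2 + (b₀ + b₁ - b₂) * (α / (1 - α)) - 1 < 0 := by
  have hα' : 1 - α ≠ 0 := (sub_pos.mpr hα.2).ne'
  have hrescale : α * b₁ / (1 - α + α * b₂) = α / (1 - α) * b₁ / (1 + α / (1 - α) * b₂) := by
    field_simp
  rw [mul_div_assoc, hrescale]
  exact mul_lt_one_sub_div_iff
    (add_pos_of_pos_of_nonneg one_pos (mul_nonneg (div_nonneg hα.1 (sub_pos.mpr hα.2).le) hb₂))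

theorem stmt_13_general (b₀ b₁ b₂ : ℝ) (hb₀ : 0 < b₀) (hb₂ : 0 < b₂)
    (α : ℝ) (hα : α ∈ Set.Ioo (0 : ℝ) 1) :
    b₀ * α / (1 - α) < 1 - α * b₁ / (1 - α + α * b₂) ↔
      α < (((b₂ - b₁ - b₀) + Real.sqrt (b₀ ^ 2 + (b₂ - b₁) ^ 2 + 2 * b₀ * (b₁ + b₂))) /
            (2 * b₀ * b₂)) /
          (1 + ((b₂ - b₁ - b₀) + Real.sqrt (b₀ ^ 2 + (b₂ - b₁) ^ 2 + 2 * b₀ * (b₁ + b₂))) /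
            (2 * b₀ * b₂)) := by
  have hroot : ((b₂ - b₁ - b₀) + Real.sqrt (b₀ ^ 2 + (b₂ - b₁) ^ 2 + 2 * b₀ * (b₁ + b₂))) /
      (2 * b₀ * b₂) = (-(b₀ + b₁ - b₂) + √((b₀ + b₁ - b₂) ^ 2 + 4 * (b₀ * b₂) * 1)) /
      (2 * (b₀ * b₂)) := by
    ring_nf
  have hb₀b₂ : 0 < b₀ * b₂ := mul_pos hb₀ hb₂
  have hβ : 0 ≤ α / (1 - α) := div_nonneg hα.1.le (sub_pos.mpr hα.2).le
  rw [branch_ineq_iff_quadratic hb₂.le (Set.Ioo_subset_Ico_self hα), hroot,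
    lt_div_one_add_iff hα.2 (by linarith [quadratic_root_pos (p := b₀ + b₁ - b₂) hb₀b₂ one_pos])]
  exact quadratic_neg_iff_lt_root hb₀b₂ one_pos hβ

/-- Branch-switching threshold of Proposition 3: for `α ∈ (0,1)`,
`b₀α/(1−α) < 1 − αb₁/(1−α+αb₂)` holds iff `α < α₀/(1+α₀)` where
`α₀ = ((b₂−b₁−b₀) + √(b₀² + (b₂−b₁)² + 2b₀(b₁+b₂)))/(2b₀b₂)`. -/
theorem stmt_13 (b₀ b₁ b₂ : ℝ) (hb₀ : 0 < b₀) (hb₂ : 0 < b₂) (hb₁ : 0 ≤ b₁)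
    (hb₁₂ : b₁ ≤ b₂) (α : ℝ) (hα : α ∈ Set.Ioo (0 : ℝ) 1) :
    b₀ * α / (1 - α) < 1 - α * b₁ / (1 - α + α * b₂) ↔
      α < (((b₂ - b₁ - b₀) + Real.sqrt (b₀ ^ 2 + (b₂ - b₁) ^ 2 + 2 * b₀ * (b₁ + b₂))) /
            (2 * b₀ * b₂)) /
          (1 + ((b₂ - b₁ - b₀) + Real.sqrt (b₀ ^ 2 + (b₂ - b₁) ^ 2 + 2 * b₀ * (b₁ + b₂))) /
            (2 * b₀ * b₂)) :=
  stmt_13_general b₀ b₁ b₂ hb₀ hb₂ α hα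
end

section
/- Let b₃ > 0, b₄ > 0, b₅ ≥ 0 and η > 0. Then the function α ↦ (1−α)·log₂(1 + b₃/(η·α·b₄/(1−α) + b₅)) is strictly decreasing on the open interval (0,1). (When b₅ = 0 the function is considered on (0,1), where the denominator η·α·b₄/(1−α) is positive.) -/
/-!
The factor `1 - α` is positive and strictly decreasing on `(0,1)`. The SINR
`b₃ / (η α b₄ / (1 - α) + b₅)` is positive and strictly decreasing, because `α / (1 - α)` is
strictly increasing; hence so is the positive rate `log₂ (1 + SINR)`. A product of two positive
strictly decreasing functions is strictly decreasing.
-/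

open Set Real

theorem StrictAntiOn.mul_of_nonneg {α M₀ : Type*} [Preorder α] [MulZeroClass M₀] [Preorder M₀]
    [PosMulStrictMono M₀] [MulPosMono M₀] {s : Set α} {f g : α → M₀}
    (hf : StrictAntiOn f s) (hg : StrictAntiOn g s) (hf₀ : ∀ x ∈ s, 0 ≤ f x)
    (hg₀ : ∀ x ∈ s, 0 ≤ g x) : StrictAntiOn (fun x => f x * g x) s :=
  fun _ hx _ hy hxy => mul_lt_mul'' (hf hx hy hxy) (hg hx hy hxy) (hf₀ _ hy) (hg₀ _ hy)

theorem strictMonoOn_div_one_sub {𝕜 : Type*} [Field 𝕜] [LinearOrder 𝕜] [IsStrictOrderedRing 𝕜] :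
    StrictMonoOn (fun x : 𝕜 => x / (1 - x)) (Iio 1) := by
  intro x hx y hy hxy
  rw [mem_Iio] at hx hy
  rw [div_lt_div_iff₀ (sub_pos.2 hx) (sub_pos.2 hy)]
  linarith

theorem Real.strictAntiOn_logb_one_add_div {b c : ℝ} (hb : 1 < b) (hc : 0 < c) :
    StrictAntiOn (fun x => logb b (1 + c / x)) (Ioi 0) := by
  intro x hx y hy hxy
  have hcy : 0 < c / y := div_pos hc hy
  exact logb_lt_logb hb (by linarith) (by gcongr)

/-- For `b₃ > 0`, `b₄ > 0`, `b₅ ≥ 0`, `η > 0`, the function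
`α ↦ (1−α)·log₂(1 + b₃/(ηαb₄/(1−α) + b₅))` is strictly decreasing on `(0,1)`. -/
theorem stmt_15 (b₃ b₄ b₅ η : ℝ) (hb₃ : 0 < b₃) (hb₄ : 0 < b₄) (hb₅ : 0 ≤ b₅)
    (hη : 0 < η) :
    StrictAntiOn
      (fun α : ℝ => (1 - α) * Real.logb 2 (1 + b₃ / (η * α * b₄ / (1 - α) + b₅)))
      (Set.Ioo (0 : ℝ) 1) := by
  set load := fun α : ℝ => η * α * b₄ / (1 - α) + b₅
  have hload_pos : MapsTo load (Ioo 0 1) (Ioi 0) := fun α ⟨h0, h1⟩ => by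
    have : 0 < 1 - α := sub_pos.2 h1
    show 0 < η * α * b₄ / (1 - α) + b₅
    positivity
  have hload_mono : StrictMonoOn load (Ioo 0 1) := by
    have hload : load = fun α => η * b₄ * (α / (1 - α)) + b₅ := by
      funext α
      simp only [load]
      ring
    rw [hload]
    exact ((strictMono_mul_left_of_pos (mul_pos hη hb₄)).comp_strictMonoOn
      (strictMonoOn_div_one_sub.mono Ioo_subset_Iio_self)).add_const b₅
  have hrate_nonneg : ∀ α ∈ Ioo (0 : ℝ) 1, 0 ≤ logb 2 (1 + b₃ / load α) := fun α hα =>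
    (logb_pos one_lt_two (lt_add_of_pos_right 1 (div_pos hb₃ (hload_pos hα)))).le
  exact StrictAntiOn.mul_of_nonneg (fun x _ y _ hxy => by linarith)
    ((strictAntiOn_logb_one_add_div one_lt_two hb₃).comp_strictMonoOn hload_mono hload_pos)
    (fun α hα => sub_nonneg.2 hα.2.le) hrate_nonneg
end

section
/- Let m and k be natural numbers with m ≥ 1 and k ≥ 1, and let a > 0, b > 0, z > 0 be reals. Let μ be the Gamma distribution with shape m and rate 1 and let ν be the Gamma distribution with shape k and rate 1. Then the product measure μ ⊗ ν assigns to the set {(u,v) ∈ ℝ × ℝ : min(a·u, b·u·v) < z} the measure 1 − (1/Γ(m)) · ∫_{z/a}^{∞} ( (∫_{z/(b·u)}^{∞} t^{k−1}·e^{−t} dt) / Γ(k) ) · u^{m−1} · e^{−u} du. -/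
open MeasureTheory ProbabilityTheory Set Real

/-!
The complementary event is `{a·u ≥ z, b·u·v ≥ z}`. Its slice at `u` is empty for `u < z/a` and
is `[z/(b·u), ∞)` otherwise, so by Fubini its probability is the `μ`-integral over `[z/a, ∞)` of
the `Gamma(k)` tail at `z/(b·u)`; writing both laws through their densities gives the formula.
-/

section Outage

variable {a b z : ℝ}

lemma prodMk_preimage_setOf_le_min (ha : 0 < a) (hb : 0 < b) (hz : 0 < z) (u : ℝ) :
    Prod.mk u ⁻¹' {p : ℝ × ℝ | z ≤ min (a * p.1) (b * p.1 * p.2)} =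
      if z / a ≤ u then Ici (z / (b * u)) else ∅ := by
  split_ifs with hu
  · have hbu : 0 < b * u := mul_pos hb ((div_pos hz ha).trans_le hu)
    ext v
    simp only [mem_preimage, mem_ofPred_eq, le_min_iff, mem_Ici, div_le_iff₀ hbu,
      (div_le_iff₀' ha).mp hu, true_and]
    ring_nf
  · ext v
    simp only [mem_preimage, mem_ofPred_eq, le_min_iff, mem_empty_iff_false, iff_false, not_and]
    exact fun h => absurd ((div_le_iff₀' ha).mpr h) hu

lemma measureReal_prod_setOf_min_lt (μ ν : Measure ℝ) [IsProbabilityMeasure μ]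
    [IsProbabilityMeasure ν] (ha : 0 < a) (hb : 0 < b) (hz : 0 < z) :
    (μ.prod ν).real {p | min (a * p.1) (b * p.1 * p.2) < z} =
      1 - ∫ u in Ici (z / a), ν.real (Ici (z / (b * u))) ∂μ := by
  have hS : MeasurableSet {p : ℝ × ℝ | z ≤ min (a * p.1) (b * p.1 * p.2)} :=
    measurableSet_le measurable_const (by fun_prop)
  have hν : Measurable fun u => ν (Ici (z / (b * u))) :=
    (show Antitone fun c => ν (Ici c) from fun _ _ h => measure_mono (Ici_subset_Ici.2 h)
      ).measurable.comp (by fun_prop)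
  have hslice (u : ℝ) : ν (Prod.mk u ⁻¹' {p | z ≤ min (a * p.1) (b * p.1 * p.2)}) =
      (Ici (z / a)).indicator (fun u => ν (Ici (z / (b * u)))) u := by
    rw [prodMk_preimage_setOf_le_min ha hb hz]
    by_cases hu : z / a ≤ u <;> simp [hu]
  have hcompl : {p : ℝ × ℝ | min (a * p.1) (b * p.1 * p.2) < z} =
      {p | z ≤ min (a * p.1) (b * p.1 * p.2)}ᶜ := by
    ext p; exact (not_le (α := ℝ)).symm
  rw [hcompl, probReal_compl_eq_one_sub hS, measureReal_def, Measure.prod_apply hS,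
    lintegral_congr hslice, lintegral_indicator measurableSet_Ici,
    ← integral_toReal hν.aemeasurable.restrict (ae_of_all _ fun _ => measure_lt_top _ _)]
  rfl

end Outage

section Gamma

variable {a r : ℝ}

lemma setIntegral_gammaMeasure (ha : 0 < a) (hr : 0 < r) {s : Set ℝ} (hs : MeasurableSet s)
    (g : ℝ → ℝ) : ∫ x in s, g x ∂gammaMeasure a r = ∫ x in s, gammaPDFReal a r x * g x := by
  rw [gammaMeasure, setIntegral_withDensity_eq_setIntegral_toReal_smul (f := gammaPDF a r)
    (measurable_gammaPDFReal a r).ennreal_ofReal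
    (ae_of_all _ fun _ => ENNReal.ofReal_lt_top) g hs]
  simp_rw [gammaPDF, ENNReal.toReal_ofReal (gammaPDFReal_nonneg ha hr _), smul_eq_mul]

lemma gammaMeasure_real (ha : 0 < a) (hr : 0 < r) {s : Set ℝ} (hs : MeasurableSet s) :
    (gammaMeasure a r).real s = ∫ x in s, gammaPDFReal a r x := by
  have := isProbabilityMeasure_gammaMeasure ha hr
  simpa using setIntegral_gammaMeasure ha hr hs fun _ => 1

lemma gammaPDFReal_natCast_one {n : ℕ} (hn : 1 ≤ n) {t : ℝ} (ht : 0 ≤ t) :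
    gammaPDFReal n 1 t = t ^ (n - 1) * exp (-t) / Gamma n := by
  rw [gammaPDFReal, if_pos ht, one_rpow, one_mul, ← Nat.cast_one, ← Nat.cast_sub hn, rpow_natCast]
  ring

lemma gammaMeasure_real_Ici_natCast {n : ℕ} (hn : 1 ≤ n) {c : ℝ} (hc : 0 ≤ c) :
    (gammaMeasure n 1).real (Ici c) = (∫ t in Ioi c, t ^ (n - 1) * exp (-t)) / Gamma n := by
  rw [gammaMeasure_real (by exact_mod_cast hn) one_pos measurableSet_Ici,
    integral_Ici_eq_integral_Ioi, ← integral_div]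
  exact setIntegral_congr_fun measurableSet_Ioi fun t ht =>
    gammaPDFReal_natCast_one hn (hc.trans ht.le)

end Gamma

/-- Exact outage probability of the TZF scheme: for independent
`U ~ Gamma(m,1)` and `V ~ Gamma(k,1)`, the probability that
`min(a·U, b·U·V) < z` equals
`1 − (1/Γ(m)) ∫_{z/a}^∞ (Γ(k, z/(b·u))/Γ(k)) u^{m−1} e^{−u} du`. -/
theorem stmt_19 (m k : ℕ) (hm : 1 ≤ m) (hk : 1 ≤ k) (a b z : ℝ)
    (ha : 0 < a) (hb : 0 < b) (hz : 0 < z) :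
    (gammaMeasure m 1).prod (gammaMeasure k 1)
        {p : ℝ × ℝ | min (a * p.1) (b * p.1 * p.2) < z} =
      ENNReal.ofReal (1 - (1 / Real.Gamma m) *
        ∫ u in Set.Ioi (z / a),
          ((∫ t in Set.Ioi (z / (b * u)), t ^ (k - 1) * Real.exp (-t)) / Real.Gamma k) *
            u ^ (m - 1) * Real.exp (-u)) := by
  have hm0 : (0 : ℝ) < m := by exact_mod_cast hm
  have := isProbabilityMeasure_gammaMeasure hm0 one_pos
  have := isProbabilityMeasure_gammaMeasure (a := k) (by exact_mod_cast hk) one_pos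
  have hza : 0 < z / a := div_pos hz ha
  have htail :
      ∫ u in Ici (z / a), (gammaMeasure k 1).real (Ici (z / (b * u))) ∂gammaMeasure m 1 =
      1 / Gamma m * ∫ u in Ioi (z / a),
        ((∫ t in Ioi (z / (b * u)), t ^ (k - 1) * exp (-t)) / Gamma k) *
          u ^ (m - 1) * exp (-u) := by
    rw [setIntegral_gammaMeasure hm0 one_pos measurableSet_Ici, integral_Ici_eq_integral_Ioi,
      ← integral_const_mul]
    refine setIntegral_congr_fun measurableSet_Ioi fun u hu => ?_
    have hu0 : 0 < u := hza.trans hu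
    rw [gammaPDFReal_natCast_one hm hu0.le, gammaMeasure_real_Ici_natCast hk (by positivity)]
    ring
  rw [← ofReal_measureReal, measureReal_prod_setOf_min_lt _ _ ha hb hz, htail]
end
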